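/- Let p : ℝ^{m_1} × ... × ℝ^{m_ℓ} → ℝ be a polynomial. Then there exists a single-player imperfect-recall extensive-form game, constructed as follows, whose expected utility equals p: a chance root with one branch per monomial of p chosen uniformly at random, and for the monomial λ_D · ∏_{j,a} (x^j_a)^{D^j_a} a path of length |D| = Σ D^j_a of decision nodes, where each occurrence of (j,a) contributes a decision node in infoset j whose action a continues the path (all other actions lead to payoff-0 leaves), terminating at a leaf with payoff λ_D times the number of monomials. Under behavioral strategy μ with μ(a | I_j) = x^j_a, the expected utility is exactly p(x). In particular, the reach probability of the terminal leaf for monomial D equals (1/N) · ∏_{j,a} (x^j_a)^{D^j_a}, where N is the number of monomials in the support of p. -/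

import Mathlib

/-!
Write `p = ∑_D λ_D x^D` over its `N` monomials. A uniform chance move picks `D`; on the path
of decision nodes through the variables of `x^D` (with multiplicity) the player stays with
probability `∏ (x^j_a)^(D^j_a)`, so the leaf at its end, with payoff `N λ_D`, contributes
exactly `λ_D x^D` to the expected utility. The zero polynomial is a single payoff-`0` leaf.
-/

/-- A single-player extensive-form game tree with infosets `j : Fin ℓ`, the infoset `j`
having `m j` actions.  Nodes are chance nodes (with a distribution over children),
decision nodes (belonging to some infoset `j`, with one child per action), or payoff
leaves.  Since a tree may contain several decision nodes of the same infoset (possibly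
along one history), this models imperfect recall and absentmindedness. -/
inductive GameTree (ℓ : ℕ) (m : Fin ℓ → ℕ) : Type where
  | leaf : ℝ → GameTree ℓ m
  | chance : (k : ℕ) → (Fin k → ℝ) → (Fin k → GameTree ℓ m) → GameTree ℓ m
  | decision : (j : Fin ℓ) → (Fin (m j) → GameTree ℓ m) → GameTree ℓ m

/-- The chance distributions of the tree are genuine probability distributions. -/
def GameTree.validChance {ℓ : ℕ} {m : Fin ℓ → ℕ} : GameTree ℓ m → Prop
  | .leaf _ => True
  | .chance k prob ch => (∀ i, 0 ≤ prob i) ∧ (∑ i, prob i = 1) ∧ ∀ i, (ch i).validChance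
  | .decision _ ch => ∀ a, (ch a).validChance

/-- Expected utility of a behavioral strategy `μ` (a distribution over the `m j` actions
at each infoset `j`): sum over leaves of reach probability times payoff, computed
recursively. -/
noncomputable def GameTree.expectedUtility {ℓ : ℕ} {m : Fin ℓ → ℕ} :
    GameTree ℓ m → ((j : Fin ℓ) → Fin (m j) → ℝ) → ℝ
  | .leaf c, _ => c
  | .chance _ prob ch, μ => ∑ i, prob i * (ch i).expectedUtility μ
  | .decision j ch, μ => ∑ a, μ j a * (ch a).expectedUtility μ

theorem Finsupp.prod_map_toList_toMultiset {α M : Type*} [CommMonoid M] (d : α →₀ ℕ)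
    (g : α → M) : (d.toMultiset.toList.map g).prod = d.prod fun a n => g a ^ n := by
  classical
  rw [← Multiset.prod_coe, ← Multiset.map_coe, Multiset.coe_toList,
    Finset.prod_multiset_map_count, Finsupp.toFinset_toMultiset]
  simp only [Finsupp.count_toMultiset, Finsupp.prod]

namespace GameTree

variable {ℓ : ℕ} {m : Fin ℓ → ℕ}

def decisionPath : List ((j : Fin ℓ) × Fin (m j)) → ℝ → GameTree ℓ m
  | [], c => .leaf c
  | v :: l, c => .decision v.1 fun b => if b = v.2 then decisionPath l c else .leaf 0

theorem validChance_decisionPath :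
    ∀ (l : List ((j : Fin ℓ) × Fin (m j))) (c : ℝ), (decisionPath l c).validChance
  | [], _ => trivial
  | v :: l, c => fun b => by
      dsimp only
      split
      · exact validChance_decisionPath l c
      · trivial

theorem expectedUtility_decisionPath (μ : (j : Fin ℓ) → Fin (m j) → ℝ) :
    ∀ (l : List ((j : Fin ℓ) × Fin (m j))) (c : ℝ),
      (decisionPath l c).expectedUtility μ = c * (l.map fun v => μ v.1 v.2).prod
  | [], c => by simp [decisionPath, expectedUtility]
  | v :: l, c => by
      rw [decisionPath, expectedUtility, Finset.sum_eq_single v.2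
        (fun b _ hb => by simp [hb, expectedUtility]) (by simp),
        if_pos rfl, expectedUtility_decisionPath μ l c, List.map_cons, List.prod_cons]
      ring

noncomputable def uniformChance {α : Type*} (s : Finset α) (t : α → GameTree ℓ m) :
    GameTree ℓ m :=
  .chance s.card (fun _ => (s.card : ℝ)⁻¹) fun i => t (s.equivFin.symm i)

theorem validChance_uniformChance {α : Type*} {s : Finset α} (hs : s.Nonempty)
    {t : α → GameTree ℓ m} (ht : ∀ a ∈ s, (t a).validChance) :
    (uniformChance s t).validChance :=
  ⟨fun _ => by positivity, by simp [hs.card_ne_zero], fun i => ht _ (s.equivFin.symm i).2⟩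

theorem expectedUtility_uniformChance {α : Type*} (s : Finset α) (t : α → GameTree ℓ m)
    (μ : (j : Fin ℓ) → Fin (m j) → ℝ) :
    (uniformChance s t).expectedUtility μ =
      (s.card : ℝ)⁻¹ * ∑ a ∈ s, (t a).expectedUtility μ := by
  rw [uniformChance, expectedUtility, ← Finset.mul_sum,
    s.equivFin.symm.sum_comp fun a => (t a).expectedUtility μ,
    Finset.sum_coe_sort s fun a => (t a).expectedUtility μ]

noncomputable def ofMvPolynomial (p : MvPolynomial ((j : Fin ℓ) × Fin (m j)) ℝ) :
    GameTree ℓ m :=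
  uniformChance p.support fun D => decisionPath D.toMultiset.toList (p.support.card * p.coeff D)

theorem validChance_ofMvPolynomial {p : MvPolynomial ((j : Fin ℓ) × Fin (m j)) ℝ}
    (hp : p ≠ 0) : (ofMvPolynomial p).validChance :=
  validChance_uniformChance (MvPolynomial.support_nonempty.2 hp) fun _ _ =>
    validChance_decisionPath _ _

theorem expectedUtility_ofMvPolynomial (p : MvPolynomial ((j : Fin ℓ) × Fin (m j)) ℝ)
    (μ : (j : Fin ℓ) → Fin (m j) → ℝ) :
    (ofMvPolynomial p).expectedUtility μ = MvPolynomial.eval (fun v => μ v.1 v.2) p := by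
  rw [ofMvPolynomial, expectedUtility_uniformChance, MvPolynomial.eval_eq, Finset.mul_sum]
  refine Finset.sum_congr rfl fun D hD => ?_
  have hN : (p.support.card : ℝ) ≠ 0 := Nat.cast_ne_zero.2 (Finset.card_ne_zero_of_mem hD)
  rw [expectedUtility_decisionPath, Finsupp.prod_map_toList_toMultiset, mul_assoc,
    inv_mul_cancel_left₀ hN, Finsupp.prod]

end GameTree

/-- Every polynomial `p` in the behavioral-strategy variables `x^j_a` is the expected
utility of some single-player imperfect-recall extensive-form game: there is a game tree
(with valid chance probabilities) whose expected utility under the behavioral strategy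
`μ` equals `p(μ)` for every `μ`. -/
theorem stmt11 (ℓ : ℕ) (m : Fin ℓ → ℕ)
    (p : MvPolynomial ((j : Fin ℓ) × Fin (m j)) ℝ) :
    ∃ T : GameTree ℓ m, T.validChance ∧
      ∀ μ : (j : Fin ℓ) → Fin (m j) → ℝ,
        T.expectedUtility μ = MvPolynomial.eval (fun v => μ v.1 v.2) p := by
  rcases eq_or_ne p 0 with rfl | hp
  · exact ⟨.leaf 0, trivial, fun μ => by simp [GameTree.expectedUtility]⟩
  · exact ⟨.ofMvPolynomial p, GameTree.validChance_ofMvPolynomial hp,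
      GameTree.expectedUtility_ofMvPolynomial p⟩
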